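/- For a continuous function g : [0,1] → ℝ with g(0) = (a/(a+1))·g(1), define ψ(g)(t) = ((a+1)/(a+t))·diag(g(t)·1_{a·n}, t·g(t)·1_n) ∈ M_{n'}(ℂ) for t ∈ [0,1]. Then ψ(g) belongs to A(n,n'), ψ(g) is self-adjoint, and tr(ψ(g)(t)) = g(t) for every t ∈ [0,1]. Moreover, g ↦ ψ(g) is linear, and ψ(g)(t) is a positive semidefinite matrix for every t whenever g takes only nonnegative values. -/

import Mathlib

/-!
On its `i`-th diagonal block `ψ(g)(t)` is the real scalar `g(t) · w_i(t)` with weights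
`w(t) = ((a+1)/(a+t)) · (1, …, 1, t)`, so `ψ(g)(t)` is a real diagonal matrix, linear in `g` and
nonnegative where `g` is. The blocks have size `n` and the weights sum to `a + 1`, which makes the
normalized trace `g(t)`. At `t = 1` every weight is `1`; at `t = 0` the weights are `(a+1)/a` on the
first `a` blocks and `0` on the last, and the condition `g(0) = (a/(a+1)) · g(1)` turns this into
the boundary condition of `A(n,n')` with `c = g(1) · 1_n`.
-/

open scoped Matrix.Norms.L2Operator ComplexOrder
open Filter MeasureTheory

noncomputable section

/-- The unit interval `[0,1]`. -/
abbrev I01 : Type := unitInterval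

/-- Square complex matrices of size `N`. -/
abbrev Mat (N : ℕ) : Type := Matrix (Fin N) (Fin N) ℂ

/-- Block-diagonal matrix with `m` diagonal blocks of size `k` (block `0` in the upper left),
realized as an `N × N` matrix, where `h : k * m = N`. -/
def cdiag {k m N : ℕ} (h : k * m = N) (blocks : Fin m → Mat k) : Mat N :=
  Matrix.reindex (finProdFinEquiv.trans (finCongr h)) (finProdFinEquiv.trans (finCongr h))
    (Matrix.blockDiagonal blocks)

/-- The Razak building block `A(n, n')` with `n' = n * (a + 1)`, realized as a subset of
`C([0,1], M_N(ℂ))` where `h : n * (a + 1) = N`: those continuous matrix-valued functions `f`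
for which there is `c ∈ M_n(ℂ)` with `f 0 = diag(c, …, c, 0_n)` (`a` copies of `c`) and
`f 1 = diag(c, …, c)` (`a + 1` copies of `c`). -/
def razakA (n a : ℕ) {N : ℕ} (h : n * (a + 1) = N) : Set C(I01, Mat N) :=
  {f | ∃ c : Mat n,
    f 0 = cdiag h (fun i : Fin (a + 1) => if (i : ℕ) < a then c else 0) ∧
    f 1 = cdiag h (fun _ : Fin (a + 1) => c)}

/-- The normalized trace of a square complex matrix. -/
def ntr {N : ℕ} (M : Mat N) : ℂ := M.trace / N

/-- The section `ψ`: for `g : [0,1] → ℝ`,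
`ψ(g)(t) = ((a+1)/(a+t)) · diag(g(t)·1_{a·n}, t·g(t)·1_n)`. -/
def psiMap (n a : ℕ) (g : C(I01, ℝ)) : I01 → Mat (n * (a + 1)) :=
  fun t => (((((a : ℝ) + 1) / ((a : ℝ) + (t : ℝ))) : ℝ) : ℂ) •
    cdiag rfl (fun i : Fin (a + 1) =>
      if (i : ℕ) < a then ((g t : ℝ) : ℂ) • (1 : Mat n)
      else ((((t : ℝ) * g t) : ℝ) : ℂ) • (1 : Mat n))

section cdiag

variable {k m N : ℕ} (h : k * m = N)

def blockOf (j : Fin N) : Fin m := ((finProdFinEquiv.trans (finCongr h)).symm j).2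

lemma cdiag_smul_one (d : Fin m → ℂ) :
    cdiag h (fun i => d i • (1 : Mat k)) = Matrix.diagonal fun j => d (blockOf h j) := by
  simp only [cdiag, Matrix.smul_one_eq_diagonal, Matrix.blockDiagonal_diagonal,
    Matrix.reindex_apply, Matrix.submatrix_diagonal_equiv]
  rfl

lemma sum_comp_blockOf {M : Type*} [AddCommMonoid M] (f : Fin m → M) :
    ∑ j, f (blockOf h j) = k • ∑ i, f i := by
  calc ∑ j, f (blockOf h j) = ∑ p : Fin k × Fin m, f p.2 :=
        Fintype.sum_equiv (finProdFinEquiv.trans (finCongr h)).symm _ _ fun _ => rfl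
    _ = k • ∑ i, f i := by simp [Fintype.sum_prod_type]

end cdiag

def psiWeight (a : ℕ) (t : ℝ) (i : Fin (a + 1)) : ℝ :=
  ((a : ℝ) + 1) / ((a : ℝ) + t) * if (i : ℕ) < a then 1 else t

section psiWeight

variable {a : ℕ}

lemma psiWeight_nonneg {t : ℝ} (ht : 0 ≤ t) (i : Fin (a + 1)) : 0 ≤ psiWeight a t i := by
  unfold psiWeight
  split_ifs <;> positivity

lemma sum_psiWeight {t : ℝ} (ht : (a : ℝ) + t ≠ 0) : ∑ i, psiWeight a t i = a + 1 := by
  simp only [psiWeight, ← Finset.mul_sum, Fin.sum_univ_castSucc, Fin.val_castSucc, Fin.is_lt,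
    if_true, Finset.sum_const, Finset.card_univ, Fintype.card_fin, nsmul_eq_mul, mul_one,
    Fin.val_last, lt_irrefl, if_false]
  field_simp

lemma div_mul_psiWeight_zero (ha : (a : ℝ) ≠ 0) (i : Fin (a + 1)) :
    (a : ℝ) / (a + 1) * psiWeight a 0 i = if (i : ℕ) < a then 1 else 0 := by
  unfold psiWeight
  field_simp
  simp

lemma psiWeight_one (i : Fin (a + 1)) : psiWeight a 1 i = 1 := by
  unfold psiWeight
  split_ifs <;> field_simp

lemma continuous_psiWeight (ha : 0 < a) (i : Fin (a + 1)) :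
    Continuous fun t : I01 => psiWeight a t i := by
  have hden (t : I01) : (a : ℝ) + t ≠ 0 := by have := t.2.1; positivity
  unfold psiWeight
  split_ifs <;> fun_prop (disch := exact hden)

end psiWeight

section psiMap

variable {n a : ℕ}

lemma psiMap_apply (g : C(I01, ℝ)) (t : I01) :
    psiMap n a g t = Matrix.diagonal fun j => ((g t * psiWeight a t (blockOf rfl j) : ℝ) : ℂ) := by
  have hblocks : (fun i : Fin (a + 1) =>
      if (i : ℕ) < a then ((g t : ℝ) : ℂ) • (1 : Mat n) else ((t * g t : ℝ) : ℂ) • 1) =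
      fun i : Fin (a + 1) => ((g t * if (i : ℕ) < a then 1 else (t : ℝ) : ℝ) : ℂ) • 1 := by
    funext i
    split_ifs <;> simp [mul_comm]
  rw [psiMap, hblocks, cdiag_smul_one, ← Matrix.diagonal_smul]
  congr 1
  funext j
  simp only [Pi.smul_apply, smul_eq_mul, psiWeight]
  push_cast
  ring

lemma continuous_psiMap (ha : 0 < a) (g : C(I01, ℝ)) : Continuous (psiMap n a g) := by
  rw [funext (psiMap_apply g)]
  exact Continuous.matrix_diagonal <| continuous_pi fun j =>
    Complex.continuous_ofReal.comp (g.continuous.mul (continuous_psiWeight ha _))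

lemma psiMap_zero (ha : a ≠ 0) {g : C(I01, ℝ)} (hg : g 0 = (a : ℝ) / (a + 1) * g 1) :
    psiMap n a g 0 = cdiag rfl fun i : Fin (a + 1) =>
      if (i : ℕ) < a then ((g 1 : ℝ) : ℂ) • (1 : Mat n) else 0 := by
  have hblocks : (fun i : Fin (a + 1) =>
      if (i : ℕ) < a then ((g 1 : ℝ) : ℂ) • (1 : Mat n) else 0) =
      fun i : Fin (a + 1) => ((if (i : ℕ) < a then g 1 else 0 : ℝ) : ℂ) • (1 : Mat n) := by
    funext i
    split_ifs <;> simp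
  rw [psiMap_apply, hblocks, cdiag_smul_one]
  congr 1
  funext j
  rw [hg, mul_comm _ (g 1), mul_assoc, Set.Icc.coe_zero,
    div_mul_psiWeight_zero (by exact_mod_cast ha)]
  split_ifs <;> simp

lemma psiMap_one (g : C(I01, ℝ)) :
    psiMap n a g 1 = cdiag rfl fun _ : Fin (a + 1) => ((g 1 : ℝ) : ℂ) • (1 : Mat n) := by
  rw [psiMap_apply, cdiag_smul_one]
  simp [psiWeight_one]

lemma psiMap_mem_razakA (ha : 0 < a) {g : C(I01, ℝ)} (hg : g 0 = (a : ℝ) / (a + 1) * g 1) :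
    (⟨psiMap n a g, continuous_psiMap ha g⟩ : C(I01, Mat (n * (a + 1)))) ∈ razakA n a rfl :=
  ⟨_, psiMap_zero ha.ne' hg, psiMap_one g⟩

lemma isSelfAdjoint_psiMap (g : C(I01, ℝ)) (t : I01) : IsSelfAdjoint (psiMap n a g t) := by
  rw [psiMap_apply]
  exact Matrix.isHermitian_diagonal_of_self_adjoint _ (funext fun _ => Complex.conj_ofReal _)

lemma ntr_psiMap (hn : 0 < n) (ha : 0 < a) (g : C(I01, ℝ)) (t : I01) :
    ntr (psiMap n a g t) = g t := by
  have hden : (a : ℝ) + t ≠ 0 := by have := t.2.1; positivity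
  rw [ntr, psiMap_apply, Matrix.trace_diagonal,
    sum_comp_blockOf rfl (fun i => ((g t * psiWeight a t i : ℝ) : ℂ)), ← Complex.ofReal_sum,
    ← Finset.mul_sum, sum_psiWeight hden, nsmul_eq_mul]
  push_cast
  field_simp

lemma psiMap_add (g₁ g₂ : C(I01, ℝ)) : psiMap n a (g₁ + g₂) = psiMap n a g₁ + psiMap n a g₂ := by
  funext t
  rw [Pi.add_apply, psiMap_apply, psiMap_apply, psiMap_apply, Matrix.diagonal_add]
  congr 1
  funext j
  simp only [ContinuousMap.add_apply]
  push_cast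
  ring

lemma psiMap_smul (r : ℝ) (g : C(I01, ℝ)) : psiMap n a (r • g) = r • psiMap n a g := by
  funext t
  rw [Pi.smul_apply, psiMap_apply, psiMap_apply, ← Matrix.diagonal_smul]
  congr 1
  funext j
  simp only [ContinuousMap.smul_apply, Pi.smul_apply, smul_eq_mul, Complex.real_smul]
  push_cast
  ring

lemma posSemidef_psiMap {g : C(I01, ℝ)} (hg : ∀ t, 0 ≤ g t) (t : I01) :
    (psiMap n a g t).PosSemidef := by
  rw [psiMap_apply, Matrix.posSemidef_diagonal_iff]
  exact fun _ => Complex.zero_le_real.2 (mul_nonneg (hg t) (psiWeight_nonneg t.2.1 _))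

end psiMap

/-- for continuous `g : [0,1] → ℝ` with `g(0) = (a/(a+1))·g(1)`, `ψ(g)` belongs
to `A(n,n')`, is self-adjoint and has normalized trace `g(t)` at each point; moreover `ψ` is
linear, and `ψ(g)(t)` is positive semidefinite for all `t` whenever `g ≥ 0`. -/
theorem razak_trace_section (n a : ℕ) (hn : 0 < n) (ha : 0 < a) :
    (∀ g : C(I01, ℝ), g 0 = ((a : ℝ) / ((a : ℝ) + 1)) * g 1 →
      Continuous (psiMap n a g) ∧
      (∃ f : C(I01, Mat (n * (a + 1))), (∀ t : I01, f t = psiMap n a g t) ∧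
        f ∈ razakA n a rfl) ∧
      (∀ t : I01, star (psiMap n a g t) = psiMap n a g t) ∧
      (∀ t : I01, ntr (psiMap n a g t) = ((g t : ℝ) : ℂ))) ∧
    (∀ g₁ g₂ : C(I01, ℝ), psiMap n a (g₁ + g₂) = psiMap n a g₁ + psiMap n a g₂) ∧
    (∀ (r : ℝ) (g : C(I01, ℝ)), psiMap n a (r • g) = r • psiMap n a g) ∧
    (∀ g : C(I01, ℝ), (∀ t : I01, 0 ≤ g t) → ∀ t : I01, (psiMap n a g t).PosSemidef) :=
  ⟨fun g hg => ⟨continuous_psiMap ha g, ⟨_, fun _ => rfl, psiMap_mem_razakA ha hg⟩,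
      fun t => (isSelfAdjoint_psiMap g t).star_eq, ntr_psiMap hn ha g⟩,
    psiMap_add, psiMap_smul, fun _ hg => posSemidef_psiMap hg⟩
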